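/- Let G be a connected graph on n ≥ 2 vertices and let C_G = G ⊙ K_1 be the corona of G with K_1 (attach a pendant leaf to each vertex of G). Then α_bn(C_G) = n + α(G). -/

import Mathlib

open SimpleGraph Finset

/-- The eccentricity of a vertex: the maximum distance to any other vertex. -/
noncomputable def ecc {V : Type*} [Fintype V] (G : SimpleGraph V) (v : V) : ℕ :=
  Finset.univ.sup fun u => G.dist v u

/-- A broadcast: each vertex broadcasts with strength at most its eccentricity. -/
def IsBroadcast {V : Type*} [Fintype V] (G : SimpleGraph V) (f : V → ℕ) : Prop :=
  ∀ v, f v ≤ ecc G v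

/-- A boundary independent broadcast. -/
def IsBnIndep {V : Type*} [Fintype V] (G : SimpleGraph V) (f : V → ℕ) : Prop :=
  IsBroadcast G f ∧ ∀ u v, u ≠ v → 1 ≤ f u → 1 ≤ f v → f u + f v ≤ G.dist u v

/-- The maximum cost of a boundary independent broadcast. -/
noncomputable def alphaBn {V : Type*} [Fintype V] (G : SimpleGraph V) : ℕ :=
  sSup {k | ∃ f : V → ℕ, IsBnIndep G f ∧ ∑ v, f v = k}

/-- The independence number. -/
noncomputable def indepNum {V : Type*} [Fintype V] (G : SimpleGraph V) : ℕ :=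
  sSup {k | ∃ s : Finset V, (∀ u ∈ s, ∀ v ∈ s, u ≠ v → ¬ G.Adj u v) ∧ s.card = k}

/-- The corona `G ⊙ K₁`: attach a pendant leaf `Sum.inr v` to each vertex `Sum.inl v`. -/
def corona {V : Type*} (G : SimpleGraph V) : SimpleGraph (V ⊕ V) where
  Adj x y :=
    match x, y with
    | Sum.inl u, Sum.inl v => G.Adj u v
    | Sum.inl u, Sum.inr v => u = v
    | Sum.inr u, Sum.inl v => u = v
    | Sum.inr _, Sum.inr _ => False
  symm := ⟨by
    rintro (u | u) (v | v) h
    · exact G.adj_symm h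
    · exact h.symm
    · exact h.symm
    · exact h.elim⟩
  loopless := ⟨by
    rintro (u | u) h
    · exact G.irrefl h
    · exact h.elim⟩

/-!
In the corona, `inl v` and `inr v` are adjacent, so at most one of them broadcasts, and a broadcast
of strength `k` from the leaf `inr v` acts on `G` like one of strength `k - 1` from `v`. A boundary
independent broadcast thus yields strengths `g v` on a set `A ⊆ V` with `g u + g v ≤ d(u, v)`,
`g v ≤ ecc v + 1`, and cost at most `∑_{v ∈ A} (g v + 1)`. The closed balls of radius `g v - 1` are
pairwise disjoint and, since a geodesic to an eccentric vertex meets every distance up to `ecc v`,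
each has at least `max (g v) 1` vertices; the vertices with `g v ≥ 1` are pairwise at distance at
least `2`, hence independent. Together this gives the bound `n + α(G)`. Conversely, broadcasting
with strength `2` from the leaves over a maximum independent set and with strength `1` from all
other leaves is boundary independent of cost `n + α(G)`; strength `2` is admissible since `n ≥ 2`.
-/

namespace SimpleGraph

variable {V : Type*} {G : SimpleGraph V}

lemma Walk.dist_map_le_length {W : Type*} {H : SimpleGraph W} (hH : H.Connected) (φ : V → W)
    (hφ : ∀ a b, G.Adj a b → H.dist (φ a) (φ b) ≤ 1) {x y : V} (p : G.Walk x y) :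
    H.dist (φ x) (φ y) ≤ p.length := by
  induction p with
  | nil => simp
  | @cons a b c hab p ih =>
    have := hH.dist_triangle (u := φ a) (v := φ b) (w := φ c)
    have := hφ a b hab
    rw [Walk.length_cons]
    omega

lemma Connected.dist_pendant_eq (hG : G.Connected) {a b c : V} (hbc : G.Adj b c)
    (hb : ∀ x, G.Adj b x → x = c) (hab : a ≠ b) : G.dist a b = G.dist a c + 1 := by
  apply le_antisymm
  · simpa [dist_eq_one_iff_adj.mpr hbc.symm] using hG.dist_triangle (u := a) (v := c) (w := b)
  · obtain ⟨p, hp⟩ := hG.exists_walk_length_eq_dist b a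
    cases p with
    | nil => exact absurd rfl hab
    | cons hbx q =>
      obtain rfl := hb _ hbx
      rw [dist_comm (u := a) (v := b), ← hp, Walk.length_cons, dist_comm]
      exact Nat.add_le_add_right (dist_le q) 1

end SimpleGraph

section Eccentricity

variable {V : Type*} [Fintype V] {G : SimpleGraph V}

lemma dist_le_ecc (G : SimpleGraph V) (v u : V) : G.dist v u ≤ ecc G v :=
  le_sup (mem_univ u)

lemma SimpleGraph.Connected.exists_dist_eq_of_le_ecc (hG : G.Connected) {v : V} {i : ℕ}
    (hi : i ≤ ecc G v) : ∃ x, G.dist v x = i := by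
  have : Nonempty V := hG.nonempty
  obtain ⟨w, -, hw⟩ := exists_mem_eq_sup univ univ_nonempty (G.dist v)
  obtain ⟨p, hp⟩ := hG.exists_walk_length_eq_dist v w
  refine ⟨p.getVert i, ?_⟩
  rw [← length_eq_dist_of_subwalk hp (p.isSubwalk_take i), Walk.take_length]
  rw [ecc, hw, ← hp] at hi
  exact min_eq_left hi

lemma SimpleGraph.Connected.le_card_filter_dist_le (hG : G.Connected) {v : V} {i : ℕ}
    (hi : i ≤ ecc G v) : i + 1 ≤ #{x | G.dist v x ≤ i} := by
  have hrange : range (i + 1) ⊆ image (G.dist v) {x | G.dist v x ≤ i} := by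
    intro j hj
    have hj : j ≤ i := Nat.lt_succ_iff.mp (mem_range.mp hj)
    obtain ⟨x, hx⟩ := hG.exists_dist_eq_of_le_ecc (hj.trans hi)
    exact mem_image.mpr ⟨x, by simpa [hx], hx⟩
  simpa using (card_le_card hrange).trans card_image_le

end Eccentricity

section Independence

variable {V : Type*} [Fintype V] {G : SimpleGraph V}

lemma card_le_indepNum {s : Finset V} (hs : ∀ u ∈ s, ∀ v ∈ s, u ≠ v → ¬ G.Adj u v) :
    #s ≤ _root_.indepNum G :=
  le_csSup ⟨Fintype.card V, by rintro k ⟨t, -, rfl⟩; exact card_le_univ t⟩ ⟨s, hs, rfl⟩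

lemma exists_card_eq_indepNum (G : SimpleGraph V) :
    ∃ s : Finset V, (∀ u ∈ s, ∀ v ∈ s, u ≠ v → ¬ G.Adj u v) ∧ #s = _root_.indepNum G :=
  Nat.sSup_mem (s := {k | ∃ s : Finset V, (∀ u ∈ s, ∀ v ∈ s, u ≠ v → ¬ G.Adj u v) ∧ #s = k})
    ⟨0, ∅, by simp⟩ ⟨Fintype.card V, by rintro k ⟨t, -, rfl⟩; exact card_le_univ t⟩

variable {A : Finset V} {g : V → ℕ}

lemma SimpleGraph.Connected.sum_sub_one_add_one_le_card (hG : G.Connected)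
    (hecc : ∀ v ∈ A, g v ≤ ecc G v + 1)
    (hdist : ∀ u ∈ A, ∀ v ∈ A, u ≠ v → g u + g v ≤ G.dist u v) :
    ∑ v ∈ A, (g v - 1 + 1) ≤ Fintype.card V := by
  classical
  let ball (v : V) : Finset V := {x | G.dist v x ≤ g v - 1}
  have hdisj : (A : Set V).PairwiseDisjoint ball := by
    intro u hu v hv huv
    refine Finset.disjoint_left.mpr fun x hxu hxv => ?_
    have hxu : G.dist u x ≤ g u - 1 := (mem_filter.mp hxu).2
    have hxv : G.dist v x ≤ g v - 1 := (mem_filter.mp hxv).2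
    have := hG.dist_triangle (u := u) (v := x) (w := v)
    have := hG.pos_dist_of_ne huv
    have := hdist u hu v hv huv
    rw [dist_comm (u := x)] at *
    omega
  calc ∑ v ∈ A, (g v - 1 + 1)
      ≤ ∑ v ∈ A, #(ball v) :=
        sum_le_sum fun v hv => hG.le_card_filter_dist_le (by have := hecc v hv; omega)
    _ = #(A.biUnion ball) := (card_biUnion hdisj).symm
    _ ≤ Fintype.card V := card_le_univ _

lemma card_filter_one_le_le_indepNum
    (hdist : ∀ u ∈ A, ∀ v ∈ A, u ≠ v → g u + g v ≤ G.dist u v) :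
    #{v ∈ A | 1 ≤ g v} ≤ _root_.indepNum G := by
  refine card_le_indepNum fun u hu v hv huv hadj => ?_
  rw [mem_filter] at hu hv
  have := hdist u hu.1 v hv.1 huv
  rw [dist_eq_one_iff_adj.mpr hadj] at this
  omega

lemma SimpleGraph.Connected.sum_add_one_le_card_add_indepNum (hG : G.Connected)
    (hecc : ∀ v ∈ A, g v ≤ ecc G v + 1)
    (hdist : ∀ u ∈ A, ∀ v ∈ A, u ≠ v → g u + g v ≤ G.dist u v) :
    ∑ v ∈ A, (g v + 1) ≤ Fintype.card V + _root_.indepNum G := by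
  have hsplit : ∀ v, g v + 1 = (g v - 1 + 1) + if 1 ≤ g v then 1 else 0 := by
    intro v; split_ifs <;> omega
  rw [sum_congr rfl fun v _ => hsplit v, sum_add_distrib, ← card_filter]
  exact add_le_add (hG.sum_sub_one_add_one_le_card hecc hdist)
    (card_filter_one_le_le_indepNum hdist)

end Independence

section Corona

variable {V : Type*} {G : SimpleGraph V}

lemma not_corona_adj_inr_inr {u v : V} :
    ¬ (corona G).Adj (Sum.inr u) (Sum.inr v) := id

variable (G) in
def coronaInl : G →g corona G where
  toFun := Sum.inl
  map_rel' := id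

lemma corona_reachable_inl_elim (x : V ⊕ V) :
    (corona G).Reachable x (Sum.inl (Sum.elim id id x)) := by
  rcases x with v | v
  · rfl
  · exact Adj.reachable rfl

lemma corona_connected (hG : G.Connected) : (corona G).Connected := by
  have : Nonempty V := hG.nonempty
  refine ⟨fun x y => ?_⟩
  exact (corona_reachable_inl_elim x).trans
    (((hG _ _).map (coronaInl G)).trans (corona_reachable_inl_elim y).symm)

lemma corona_dist_inl_inl (hG : G.Connected) (u v : V) :
    (corona G).dist (Sum.inl u) (Sum.inl v) = G.dist u v := by
  apply le_antisymm
  · obtain ⟨p, hp⟩ := hG.exists_walk_length_eq_dist u v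
    rw [← hp, ← Walk.length_map (coronaInl G)]
    exact dist_le _
  · obtain ⟨p, hp⟩ := (corona_connected hG).exists_walk_length_eq_dist (Sum.inl u) (Sum.inl v)
    rw [← hp]
    refine Walk.dist_map_le_length hG (Sum.elim id id) ?_ p
    rintro (a | a) (b | b) hab
    · exact (dist_eq_one_iff_adj (G := G)).mpr hab |>.le
    · obtain rfl : a = b := hab
      simp
    · obtain rfl : a = b := hab
      simp
    · exact absurd hab not_corona_adj_inr_inr

lemma corona_dist_inr (hG : G.Connected) {x : V ⊕ V} {v : V} (hx : x ≠ Sum.inr v) :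
    (corona G).dist x (Sum.inr v) = (corona G).dist x (Sum.inl v) + 1 := by
  refine (corona_connected hG).dist_pendant_eq rfl ?_ hx
  rintro (w | w) h
  · exact congrArg Sum.inl h.symm
  · exact absurd h not_corona_adj_inr_inr

lemma corona_dist_inl_inr (hG : G.Connected) (u v : V) :
    (corona G).dist (Sum.inl u) (Sum.inr v) = G.dist u v + 1 := by
  rw [corona_dist_inr hG Sum.inl_ne_inr, corona_dist_inl_inl hG]

lemma corona_dist_inr_inr (hG : G.Connected) {u v : V} (huv : u ≠ v) :
    (corona G).dist (Sum.inr u) (Sum.inr v) = G.dist u v + 2 := by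
  rw [corona_dist_inr hG (by simpa), dist_comm, corona_dist_inl_inr hG, dist_comm]

variable [Fintype V]

lemma ecc_corona_inl_le (hG : G.Connected) (v : V) :
    ecc (corona G) (Sum.inl v) ≤ ecc G v + 1 := by
  refine Finset.sup_le fun x _ => ?_
  rcases x with u | u
  · rw [corona_dist_inl_inl hG]
    exact (dist_le_ecc G v u).trans (Nat.le_succ _)
  · rw [corona_dist_inl_inr hG]
    exact Nat.add_le_add_right (dist_le_ecc G v u) 1

lemma ecc_corona_inr_le (hG : G.Connected) (v : V) :
    ecc (corona G) (Sum.inr v) ≤ ecc G v + 2 := by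
  refine Finset.sup_le fun x _ => ?_
  by_cases hx : x = Sum.inr v
  · simp [hx]
  · rw [dist_comm, corona_dist_inr hG hx, dist_comm]
    exact Nat.add_le_add_right ((dist_le_ecc _ _ x).trans (ecc_corona_inl_le hG v)) 1

lemma two_le_ecc_corona_inr (hG : G.Connected) (hn : 2 ≤ Fintype.card V) (v : V) :
    2 ≤ ecc (corona G) (Sum.inr v) := by
  obtain ⟨u, huv⟩ := Fintype.exists_ne_of_one_lt_card hn v
  have := hG.pos_dist_of_ne huv
  have := dist_le_ecc (corona G) (Sum.inr v) (Sum.inl u)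
  rw [dist_comm, corona_dist_inl_inr hG] at this
  omega

end Corona

section Broadcast

variable {V : Type*} [Fintype V] {G : SimpleGraph V}

lemma IsBnIndep.sum_le_alphaBn {f : V → ℕ} (hf : IsBnIndep G f) : ∑ v, f v ≤ alphaBn G :=
  le_csSup ⟨∑ v, ecc G v, by rintro _ ⟨f', hf', rfl⟩; exact sum_le_sum fun v _ => hf'.1 v⟩
    ⟨f, hf, rfl⟩

lemma alphaBn_le {k : ℕ} (h : ∀ f, IsBnIndep G f → ∑ v, f v ≤ k) : alphaBn G ≤ k :=
  csSup_le ⟨0, 0, ⟨fun v => Nat.zero_le _, fun _ _ _ hu => absurd hu (by simp)⟩, by simp⟩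
    (by rintro _ ⟨f, hf, rfl⟩; exact h f hf)

def baseStrength (f : V ⊕ V → ℕ) (v : V) : ℕ := f (Sum.inl v) + (f (Sum.inr v) - 1)

namespace IsBnIndep

variable {f : V ⊕ V → ℕ}

lemma corona_inl_eq_zero_or_inr_eq_zero (hf : IsBnIndep (corona G) f) (hG : G.Connected)
    (v : V) : f (Sum.inl v) = 0 ∨ f (Sum.inr v) = 0 := by
  by_contra! h
  have := hf.2 _ _ Sum.inl_ne_inr (Nat.one_le_iff_ne_zero.mpr h.1)
    (Nat.one_le_iff_ne_zero.mpr h.2)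
  rw [corona_dist_inl_inr hG, dist_self] at this
  omega

lemma baseStrength_le_ecc (hf : IsBnIndep (corona G) f) (hG : G.Connected)
    (v : V) : baseStrength f v ≤ ecc G v + 1 := by
  have := hf.1 (Sum.inl v)
  have := hf.1 (Sum.inr v)
  have := ecc_corona_inl_le hG v
  have := ecc_corona_inr_le hG v
  have := hf.corona_inl_eq_zero_or_inr_eq_zero hG v
  unfold baseStrength
  omega

lemma baseStrength_add_le_dist (hf : IsBnIndep (corona G) f) (hG : G.Connected)
    {u v : V} (huv : u ≠ v) (hu : 1 ≤ f (Sum.inl u) + f (Sum.inr u))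
    (hv : 1 ≤ f (Sum.inl v) + f (Sum.inr v)) :
    baseStrength f u + baseStrength f v ≤ G.dist u v := by
  unfold baseStrength
  rcases hf.corona_inl_eq_zero_or_inr_eq_zero hG u with hu' | hu' <;>
    rcases hf.corona_inl_eq_zero_or_inr_eq_zero hG v with hv' | hv'
  · have := hf.2 (Sum.inr u) (Sum.inr v) (by simpa) (by omega) (by omega)
    rw [corona_dist_inr_inr hG huv] at this
    omega
  · have := hf.2 (Sum.inr u) (Sum.inl v) Sum.inr_ne_inl (by omega) (by omega)
    rw [dist_comm, corona_dist_inl_inr hG, dist_comm] at this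
    omega
  · have := hf.2 (Sum.inl u) (Sum.inr v) Sum.inl_ne_inr (by omega) (by omega)
    rw [corona_dist_inl_inr hG] at this
    omega
  · have := hf.2 (Sum.inl u) (Sum.inl v) (by simpa) (by omega) (by omega)
    rw [corona_dist_inl_inl hG] at this
    omega

lemma sum_corona_le (hf : IsBnIndep (corona G) f) (hG : G.Connected) :
    ∑ x, f x ≤ Fintype.card V + _root_.indepNum G := by
  classical
  let A : Finset V := {v | 1 ≤ f (Sum.inl v) + f (Sum.inr v)}
  calc ∑ x, f x = ∑ v, (f (Sum.inl v) + f (Sum.inr v)) := by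
        rw [Fintype.sum_sum_type, sum_add_distrib]
    _ = ∑ v ∈ A, (f (Sum.inl v) + f (Sum.inr v)) :=
        (sum_filter_of_ne fun v _ h => Nat.one_le_iff_ne_zero.mpr h).symm
    _ ≤ ∑ v ∈ A, (baseStrength f v + 1) :=
        sum_le_sum fun v _ => by unfold baseStrength; omega
    _ ≤ Fintype.card V + _root_.indepNum G :=
        hG.sum_add_one_le_card_add_indepNum (fun v _ => hf.baseStrength_le_ecc hG v)
          fun u hu v hv huv =>
            hf.baseStrength_add_le_dist hG huv (mem_filter.mp hu).2 (mem_filter.mp hv).2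

end IsBnIndep

variable [DecidableEq V]

def leafBroadcast (s : Finset V) : V ⊕ V → ℕ := Sum.elim 0 fun v => if v ∈ s then 2 else 1

lemma sum_leafBroadcast (s : Finset V) : ∑ x, leafBroadcast s x = Fintype.card V + #s := by
  have := card_le_univ s
  simp only [leafBroadcast, Fintype.sum_sum_type, Sum.elim_inl, Sum.elim_inr, Pi.zero_apply,
    sum_const_zero, sum_ite, sum_const, smul_eq_mul, filter_mem_eq_inter, univ_inter,
    filter_notMem_eq_sdiff, card_univ_sdiff]
  omega

lemma isBnIndep_leafBroadcast (hG : G.Connected) (hn : 2 ≤ Fintype.card V) {s : Finset V}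
    (hs : ∀ u ∈ s, ∀ v ∈ s, u ≠ v → ¬ G.Adj u v) : IsBnIndep (corona G) (leafBroadcast s) := by
  refine ⟨?_, ?_⟩
  · rintro (v | v)
    · exact Nat.zero_le _
    · have := two_le_ecc_corona_inr hG hn v
      simp only [leafBroadcast, Sum.elim_inr]
      split_ifs <;> omega
  · rintro (u | u) (v | v) huv hu hv <;>
      simp only [leafBroadcast, Sum.elim_inl, Sum.elim_inr, Pi.zero_apply] at hu hv ⊢
    · omega
    · omega
    · omega
    have huv : u ≠ v := by simpa using huv
    rw [corona_dist_inr_inr hG huv]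
    by_cases hadj : G.Adj u v
    · have : ¬ (u ∈ s ∧ v ∈ s) := fun h => hs u h.1 v h.2 huv hadj
      rw [dist_eq_one_iff_adj.mpr hadj]
      split_ifs <;> simp_all
    · have := hG.one_lt_dist_of_ne_of_not_adj huv hadj
      split_ifs <;> omega

end Broadcast

theorem alphaBn_corona {V : Type*} [Fintype V]
    (G : SimpleGraph V) (hG : G.Connected) (hn : 2 ≤ Fintype.card V) :
    alphaBn (corona G) = Fintype.card V + _root_.indepNum G := by
  classical
  apply le_antisymm
  · exact alphaBn_le fun f hf => hf.sum_corona_le hG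
  · obtain ⟨s, hs, hcard⟩ := exists_card_eq_indepNum G
    calc Fintype.card V + _root_.indepNum G = ∑ x, leafBroadcast s x := by
          rw [sum_leafBroadcast, hcard]
      _ ≤ alphaBn (corona G) := (isBnIndep_leafBroadcast hG hn hs).sum_le_alphaBn
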